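/- arXiv:2402.06965 — 3 statements merged into one kernel-verified Lean document; each statement's English description precedes it below -/
import Mathlib

section
/- Suppose H⁺, H⁻ : ℝ² → ℝ² are continuously differentiable with bounded derivatives on the closed upper and lower half-planes (relative to the graph of φ) respectively, j is bounded, and for all sufficiently small Δs, Δl > 0 the circulation identity ∮_{∂ΔF} H · ds = ∫_{ΔF} j · n dA holds for the curved rectangle ΔF built over φ with half-height Δl. If further the area-averaged current (1/(2Δs))∫_{ΔF} j·n dA → 0 as Δl → 0 then Δs → 0, then H⁺(0,0)·τ = H⁻(0,0)·τ where τ = (1,0). -/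
open Set Filter Topology intervalIntegral

noncomputable section

/-- The piecewise magnetic field: `Hplus` above the graph of φ, `Hminus` below. -/
def Hfield (φ : ℝ → ℝ) (Hplus Hminus : ℝ × ℝ → ℝ × ℝ) (p : ℝ × ℝ) : ℝ × ℝ :=
  if φ p.1 ≤ p.2 then Hplus p else Hminus p

/-- The circulation ∮_{∂ΔF} H · ds over the boundary of the curved rectangle ΔF
built over the graph of φ with half-width s and half-height l, following the
parametrizations γ₁,…,γ₄ of its four edges S₁,…,S₄. -/
def circulation (φ : ℝ → ℝ) (Hplus Hminus : ℝ × ℝ → ℝ × ℝ) (s l : ℝ) : ℝ :=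
  (∫ ζ in (-l)..l, (Hfield φ Hplus Hminus (s, φ s + ζ)).2) +
  (∫ θ in (-s)..s, (-(Hfield φ Hplus Hminus (-θ, φ (-θ) + l)).1 -
      (Hfield φ Hplus Hminus (-θ, φ (-θ) + l)).2 * deriv φ (-θ))) +
  (∫ ζ in (-l)..l, -(Hfield φ Hplus Hminus (-s, φ (-s) - ζ)).2) +
  (∫ θ in (-s)..s, ((Hfield φ Hplus Hminus (θ, φ θ - l)).1 +
      (Hfield φ Hplus Hminus (θ, φ θ - l)).2 * deriv φ θ))

/-! As `Δl → 0` the two vertical edges of `ΔF` shrink to points, so their contributions vanish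
even though the field jumps across the interface, while the two horizontal edges converge to the
integrals of `H⁺` and `H⁻` along the graph of `φ`, traversed in opposite directions. Hence
the limit `g Δs` is the mean over `[-Δs, Δs]` of the jump `(H⁻ - H⁺) · (1, φ')` along the graph,
and as `Δs → 0` this mean tends to the jump at `θ = 0`, which is `(H⁻ - H⁺)(0,0) · τ` because
`φ 0 = φ' 0 = 0`. -/

theorem tendsto_intervalIntegral_neg_self_div_two_mul {f : ℝ → ℝ} (hf : Continuous f) :
    Tendsto (fun s => (∫ x in (-s)..s, f x) / (2 * s)) (𝓝[>] 0) (𝓝 (f 0)) := by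
  set G : ℝ → ℝ := fun u => ∫ x in (0:ℝ)..u, f x
  have hG : ∀ t, HasDerivAt G (f t) t := fun t => (hf.integral_hasStrictDerivAt 0 t).hasDerivAt
  have hG_neg : HasDerivAt (fun u => G (-u)) (-f 0) 0 := by
    simpa [Function.comp_def] using (hG (-0)).comp 0 (hasDerivAt_neg 0)
  have hderiv : HasDerivAt (fun u => G u - G (-u)) (2 * f 0) 0 :=
    ((hG 0).fun_sub hG_neg).congr_deriv (by ring)
  have hsplit : ∀ s, G s - G (-s) = ∫ x in (-s)..s, f x := fun s =>
    integral_interval_sub_left (hf.intervalIntegrable _ _) (hf.intervalIntegrable _ _)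
  convert hderiv.tendsto_slope_zero_right.div_const 2 using 2 with s
  · simp only [zero_add, neg_zero, sub_self, sub_zero, hsplit, smul_eq_mul]
    ring
  · ring

theorem tendsto_intervalIntegral_neg_self_of_eqOn {f p q : ℝ → ℝ} (hp : Continuous p)
    (hq : Continuous q) (hfp : EqOn f p (Ioi 0)) (hfq : EqOn f q (Iio 0)) :
    Tendsto (fun l => ∫ ζ in (-l)..l, f ζ) (𝓝[>] 0) (𝓝 0) := by
  have hsplit : ∀ l > 0, ∫ ζ in (-l)..l, f ζ = ∫ ζ in (0:ℝ)..l, (p ζ + q (-ζ)) := by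
    intro l hl
    have hleft : EqOn q f (uIoo (-l) 0) := fun ζ hζ =>
      (hfq (by rw [uIoo_of_le (by linarith)] at hζ; exact hζ.2)).symm
    have hright : EqOn p f (uIoo 0 l) := fun ζ hζ =>
      (hfp (by rw [uIoo_of_le hl.le] at hζ; exact hζ.1)).symm
    rw [← integral_add_adjacent_intervals ((hq.intervalIntegrable _ _).congr_uIoo hleft)
      ((hp.intervalIntegrable _ _).congr_uIoo hright), ← integral_congr_uIoo hleft,
      ← integral_congr_uIoo hright, integral_add (hp.intervalIntegrable _ _)
      ((by fun_prop : Continuous fun ζ => q (-ζ)).intervalIntegrable _ _), integral_comp_neg,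
      neg_zero, add_comm]
  have hcont : Continuous fun l => ∫ ζ in (0:ℝ)..l, (p ζ + q (-ζ)) :=
    continuous_primitive
      (fun a b => (by fun_prop : Continuous fun ζ => p ζ + q (-ζ)).intervalIntegrable a b) 0
  have hlim : Tendsto (fun l => ∫ ζ in (0:ℝ)..l, (p ζ + q (-ζ))) (𝓝[>] 0) (𝓝 0) := by
    simpa using (hcont.tendsto 0).mono_left nhdsWithin_le_nhds
  refine hlim.congr' ?_
  filter_upwards [self_mem_nhdsWithin] with l hl
  exact (hsplit l hl).symm

theorem tendsto_intervalIntegral_of_forall_pos_eq {F u : ℝ → ℝ → ℝ}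
    (hu : Continuous (Function.uncurry u)) (hF : ∀ l > 0, F l = u l) (a b : ℝ) :
    Tendsto (fun l => ∫ θ in a..b, F l θ) (𝓝[>] 0) (𝓝 (∫ θ in a..b, u 0 θ)) := by
  refine (((continuous_parametric_intervalIntegral_of_continuous' hu a b).tendsto 0).mono_left
    nhdsWithin_le_nhds).congr' ?_
  filter_upwards [self_mem_nhdsWithin] with l hl
  rw [hF l hl]

section Interface

variable {φ : ℝ → ℝ} {Hplus Hminus : ℝ × ℝ → ℝ × ℝ}

theorem Hfield_of_le {x y : ℝ} (h : φ x ≤ y) : Hfield φ Hplus Hminus (x, y) = Hplus (x, y) :=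
  if_pos h

theorem Hfield_of_lt {x y : ℝ} (h : y < φ x) : Hfield φ Hplus Hminus (x, y) = Hminus (x, y) :=
  if_neg h.not_ge

variable (φ) in
def tangentialComponent (H : ℝ × ℝ → ℝ × ℝ) (θ : ℝ) : ℝ :=
  (H (θ, φ θ)).1 + (H (θ, φ θ)).2 * deriv φ θ

theorem continuous_tangentialComponent {H : ℝ × ℝ → ℝ × ℝ} (hφ : Continuous φ)
    (hφ' : Continuous (deriv φ)) (hH : Continuous H) : Continuous (tangentialComponent φ H) := by
  unfold tangentialComponent; fun_prop

theorem tendsto_circulation_nhdsGT_zero (hφ : Continuous φ) (hφ' : Continuous (deriv φ))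
    (hp : Continuous Hplus) (hm : Continuous Hminus) (s : ℝ) :
    Tendsto (circulation φ Hplus Hminus s) (𝓝[>] 0)
      (𝓝 (∫ θ in (-s)..s, (tangentialComponent φ Hminus θ - tangentialComponent φ Hplus θ))) := by
  have hS₁ : Tendsto (fun l => ∫ ζ in (-l)..l, (Hfield φ Hplus Hminus (s, φ s + ζ)).2)
      (𝓝[>] 0) (𝓝 0) :=
    tendsto_intervalIntegral_neg_self_of_eqOn (p := fun ζ => (Hplus (s, φ s + ζ)).2)
      (q := fun ζ => (Hminus (s, φ s + ζ)).2) (by fun_prop) (by fun_prop)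
      (fun ζ (hζ : 0 < ζ) => by rw [Hfield_of_le]; linarith)
      (fun ζ (hζ : ζ < 0) => by rw [Hfield_of_lt]; linarith)
  have hS₂ : Tendsto (fun l => ∫ θ in (-s)..s, (-(Hfield φ Hplus Hminus (-θ, φ (-θ) + l)).1 -
      (Hfield φ Hplus Hminus (-θ, φ (-θ) + l)).2 * deriv φ (-θ))) (𝓝[>] 0)
      (𝓝 (∫ θ in (-s)..s, -tangentialComponent φ Hplus (-θ))) := by
    refine tendsto_intervalIntegral_of_forall_pos_eq
      (u := fun l θ => -(Hplus (-θ, φ (-θ) + l)).1 - (Hplus (-θ, φ (-θ) + l)).2 * deriv φ (-θ))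
      (by fun_prop) (fun l hl => funext fun θ => by rw [Hfield_of_le]; linarith) (-s) s
      |>.trans_eq (congrArg 𝓝 (integral_congr fun θ _ => ?_))
    simp only [add_zero, tangentialComponent]
    ring
  have hS₃ : Tendsto (fun l => ∫ ζ in (-l)..l, -(Hfield φ Hplus Hminus (-s, φ (-s) - ζ)).2)
      (𝓝[>] 0) (𝓝 0) :=
    tendsto_intervalIntegral_neg_self_of_eqOn (p := fun ζ => -(Hminus (-s, φ (-s) - ζ)).2)
      (q := fun ζ => -(Hplus (-s, φ (-s) - ζ)).2) (by fun_prop) (by fun_prop)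
      (fun ζ (hζ : 0 < ζ) => by rw [Hfield_of_lt]; linarith)
      (fun ζ (hζ : ζ < 0) => by rw [Hfield_of_le]; linarith)
  have hS₄ : Tendsto (fun l => ∫ θ in (-s)..s, ((Hfield φ Hplus Hminus (θ, φ θ - l)).1 +
      (Hfield φ Hplus Hminus (θ, φ θ - l)).2 * deriv φ θ)) (𝓝[>] 0)
      (𝓝 (∫ θ in (-s)..s, tangentialComponent φ Hminus θ)) :=
    tendsto_intervalIntegral_of_forall_pos_eq
      (u := fun l θ => (Hminus (θ, φ θ - l)).1 + (Hminus (θ, φ θ - l)).2 * deriv φ θ)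
      (by fun_prop) (fun l hl => funext fun θ => by rw [Hfield_of_lt]; linarith) (-s) s
      |>.trans_eq (by simp only [sub_zero, tangentialComponent])
  have hTplus : Continuous (tangentialComponent φ Hplus) :=
    continuous_tangentialComponent hφ hφ' hp
  have hTminus : Continuous (tangentialComponent φ Hminus) :=
    continuous_tangentialComponent hφ hφ' hm
  have hsum : ∫ θ in (-s)..s, (tangentialComponent φ Hminus θ - tangentialComponent φ Hplus θ) =
      0 + (∫ θ in (-s)..s, -tangentialComponent φ Hplus (-θ)) + 0 +
        ∫ θ in (-s)..s, tangentialComponent φ Hminus θ := by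
    rw [integral_sub (hTminus.intervalIntegrable _ _) (hTplus.intervalIntegrable _ _),
      intervalIntegral.integral_neg, integral_comp_neg (fun θ => tangentialComponent φ Hplus θ),
      neg_neg]
    ring
  rw [hsum]
  exact ((hS₁.add hS₂).add hS₃).add hS₄

end Interface

theorem stmt_3_general (s₀ l₀ : ℝ) (hs₀ : 0 < s₀) (hl₀ : 0 < l₀)
    (φ : ℝ → ℝ) (hφ : ContDiff ℝ 2 φ) (h0 : φ 0 = 0) (h0' : deriv φ 0 = 0)
    (Hplus Hminus : ℝ × ℝ → ℝ × ℝ)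
    (hHp : ContDiff ℝ 1 Hplus) (hHm : ContDiff ℝ 1 Hminus)
    (K : ℝ → ℝ → ℝ)
    (hcirc : ∀ s ∈ Ioo (0:ℝ) s₀, ∀ l ∈ Ioo (0:ℝ) l₀,
      circulation φ Hplus Hminus s l = K s l)
    (g : ℝ → ℝ)
    (hK1 : ∀ s ∈ Ioo (0:ℝ) s₀,
      Tendsto (fun l => K s l / (2 * s)) (𝓝[>] 0) (𝓝 (g s)))
    (hK2 : Tendsto g (𝓝[>] 0) (𝓝 0)) :
    (Hplus (0, 0)).1 = (Hminus (0, 0)).1 := by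
  set jump := fun θ => tangentialComponent φ Hminus θ - tangentialComponent φ Hplus θ
  have hφ' : Continuous (deriv φ) := hφ.continuous_deriv (by norm_num)
  have hjump : Continuous jump :=
    (continuous_tangentialComponent hφ.continuous hφ' hHm.continuous).sub
      (continuous_tangentialComponent hφ.continuous hφ' hHp.continuous)
  have hg : ∀ s ∈ Ioo 0 s₀, g s = (∫ θ in (-s)..s, jump θ) / (2 * s) := fun s hs =>
    tendsto_nhds_unique (hK1 s hs) <|
      ((tendsto_circulation_nhdsGT_zero hφ.continuous hφ' hHp.continuous hHm.continuous
        s).div_const _).congr' <| by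
        filter_upwards [Ioo_mem_nhdsGT hl₀] with l hl
        rw [hcirc s hs l hl]
  have hg_lim : Tendsto g (𝓝[>] 0) (𝓝 (jump 0)) :=
    (tendsto_intervalIntegral_neg_self_div_two_mul hjump).congr' <| by
      filter_upwards [Ioo_mem_nhdsGT hs₀] with s hs
      exact (hg s hs).symm
  have hjump0 : jump 0 = 0 := tendsto_nhds_unique hg_lim hK2
  simp only [jump, tangentialComponent, h0, h0', mul_zero, add_zero, sub_eq_zero] at hjump0
  exact hjump0.symm

/-- Continuity of the tangential component of H across the interface when the
surface current density vanishes: if the circulation over every small curved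
rectangle ΔF equals the current K through ΔF, and the area-averaged current
K/(2Δs) tends to 0 (first Δl → 0, then Δs → 0), then H⁺(0,0)·τ = H⁻(0,0)·τ. -/
theorem stmt_3 (s₀ l₀ M C : ℝ) (hs₀ : 0 < s₀) (hl₀ : 0 < l₀) (hM : 0 < M) (hC : 0 < C)
    (φ : ℝ → ℝ) (hφ : ContDiff ℝ 2 φ) (h0 : φ 0 = 0) (h0' : deriv φ 0 = 0)
    (hφb : ∀ θ, |deriv φ θ| ≤ M ∧ |deriv (deriv φ) θ| ≤ M)
    (Hplus Hminus : ℝ × ℝ → ℝ × ℝ)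
    (hHp : ContDiff ℝ 1 Hplus) (hHm : ContDiff ℝ 1 Hminus)
    (hHpb : ∀ p, ‖fderiv ℝ Hplus p‖ ≤ M) (hHmb : ∀ p, ‖fderiv ℝ Hminus p‖ ≤ M)
    (K : ℝ → ℝ → ℝ)
    (hKb : ∀ s ∈ Ioo (0:ℝ) s₀, ∀ l ∈ Ioo (0:ℝ) l₀, |K s l| ≤ C * s * l)
    (hcirc : ∀ s ∈ Ioo (0:ℝ) s₀, ∀ l ∈ Ioo (0:ℝ) l₀,
      circulation φ Hplus Hminus s l = K s l)
    (g : ℝ → ℝ)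
    (hK1 : ∀ s ∈ Ioo (0:ℝ) s₀,
      Tendsto (fun l => K s l / (2 * s)) (𝓝[>] 0) (𝓝 (g s)))
    (hK2 : Tendsto g (𝓝[>] 0) (𝓝 0)) :
    (Hplus (0, 0)).1 = (Hminus (0, 0)).1 :=
  stmt_3_general s₀ l₀ hs₀ hl₀ φ hφ h0 h0' Hplus Hminus hHp hHm K hcirc g hK1 hK2
end
end

section
/- Let Φ : B_r(0) ⊂ ℝ² → ℝ be twice continuously differentiable with Φ(0,0) = ∂₁Φ(0,0) = ∂₂Φ(0,0) = 0 and bounded second derivatives. Let D : ℝ³ → ℝ³ be C¹ with D and ∇D bounded. Then |∫₀^{2π}∫₀^r s·D(s cos α, Φ(s cos α, s sin α) + Δl, s sin α)·(∂₁Φ, −1, ∂₂Φ)(s cos α, s sin α) ds dα − π r² D(0, Δl, 0)·(0,−1,0)| ≤ c·r³, with c independent of r and Δl. -/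
/-!
Since `Φ` vanishes to second order at the origin and its second derivative is bounded by `M`,
one has `‖DΦ(q)‖ ≤ M‖q‖` and `|Φ(q)| ≤ M‖q‖²`, while `D` is `M`-Lipschitz. Hence at radius `s`
the polar integrand differs from `s · D(0, Δl, 0)·(0, −1, 0)` by `O(s²)`, uniformly in the angle
and in `Δl`; integrating over the disc of radius `r` turns this into an `O(r³)` error around the
main term `π r² D(0, Δl, 0)·(0, −1, 0)`.
-/

open Set Real intervalIntegral

noncomputable section

/-- Dot product on ℝ³ realized as ℝ × ℝ × ℝ. -/
def dotP (a b : ℝ × ℝ × ℝ) : ℝ := a.1 * b.1 + a.2.1 * b.2.1 + a.2.2 * b.2.2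

/-- First and second partial derivatives of Φ : ℝ² → ℝ. -/
def p1 (Φ : ℝ × ℝ → ℝ) (q : ℝ × ℝ) : ℝ := fderiv ℝ Φ q (1, 0)
def p2 (Φ : ℝ × ℝ → ℝ) (q : ℝ × ℝ) : ℝ := fderiv ℝ Φ q (0, 1)

section MeanValue

variable {E F : Type*} [NormedAddCommGroup E] [NormedSpace ℝ E]
  [NormedAddCommGroup F] [NormedSpace ℝ F] {f : E → F} {C : ℝ}

theorem norm_le_mul_norm_of_norm_fderiv_le (hf : Differentiable ℝ f)
    (hbound : ∀ x, ‖fderiv ℝ f x‖ ≤ C) (h0 : f 0 = 0) (x : E) : ‖f x‖ ≤ C * ‖x‖ := by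
  simpa [h0] using convex_univ.norm_image_sub_le_of_norm_fderiv_le (fun y _ => hf y)
    (fun y _ => hbound y) (mem_univ 0) (mem_univ x)

theorem norm_le_mul_norm_sq_of_norm_fderiv_le (hf : Differentiable ℝ f) (hC : 0 ≤ C)
    (hbound : ∀ x, ‖fderiv ℝ f x‖ ≤ C * ‖x‖) (h0 : f 0 = 0) (x : E) :
    ‖f x‖ ≤ C * ‖x‖ ^ 2 := by
  have hball : ∀ y ∈ Metric.closedBall (0 : E) ‖x‖, ‖fderiv ℝ f y‖ ≤ C * ‖x‖ := fun y hy =>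
    (hbound y).trans (mul_le_mul_of_nonneg_left (mem_closedBall_zero_iff.mp hy) hC)
  have h := (convex_closedBall (0 : E) ‖x‖).norm_image_sub_le_of_norm_fderiv_le
    (fun y _ => hf y) hball (Metric.mem_closedBall_self (norm_nonneg x))
    (mem_closedBall_zero_iff.mpr le_rfl)
  rw [h0, sub_zero, sub_zero] at h
  linarith

end MeanValue

theorem ContinuousLinearMap.eq_zero_of_apply_one_zero_of_apply_zero_one
    {F : Type*} [NormedAddCommGroup F] [NormedSpace ℝ F] (L : ℝ × ℝ →L[ℝ] F)
    (h₁ : L (1, 0) = 0) (h₂ : L (0, 1) = 0) : L = 0 := by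
  ext <;> simpa

theorem abs_dotP_le (a b : ℝ × ℝ × ℝ) : |dotP a b| ≤ ‖a‖ * (|b.1| + |b.2.1| + |b.2.2|) := by
  have h₁ : |a.1| ≤ ‖a‖ := norm_fst_le a
  have h₂ : |a.2.1| ≤ ‖a‖ := (norm_fst_le a.2).trans (norm_snd_le a)
  have h₃ : |a.2.2| ≤ ‖a‖ := (norm_snd_le a.2).trans (norm_snd_le a)
  calc |dotP a b| ≤ |a.1| * |b.1| + |a.2.1| * |b.2.1| + |a.2.2| * |b.2.2| := by
        simp only [dotP, ← abs_mul]
        exact abs_add_three _ _ _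
    _ ≤ ‖a‖ * |b.1| + ‖a‖ * |b.2.1| + ‖a‖ * |b.2.2| := by gcongr
    _ = _ := by ring

theorem dotP_sub_dotP (a b c d : ℝ × ℝ × ℝ) :
    dotP a b - dotP c d = dotP a (b - d) + dotP (a - c) d := by
  simp only [dotP, Prod.fst_sub, Prod.snd_sub]
  ring

theorem norm_polar_le (s α : ℝ) (hs : 0 ≤ s) : ‖((s * cos α, s * sin α) : ℝ × ℝ)‖ ≤ s := by
  rw [Prod.norm_def, Real.norm_eq_abs, Real.norm_eq_abs, abs_mul, abs_mul, abs_of_nonneg hs]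
  exact max_le (mul_le_of_le_one_right hs (abs_cos_le_one α))
    (mul_le_of_le_one_right hs (abs_sin_le_one α))

/-- Flux density of `D` through the surface `x₂ = Φ(x₁, x₃) + Δl` in polar coordinates `(α, s)`
of the `(x₁, x₃)`-plane; the leading factor `s` is the polar Jacobian. -/
def topFluxIntegrand (Φ : ℝ × ℝ → ℝ) (D : ℝ × ℝ × ℝ → ℝ × ℝ × ℝ) (Δl α s : ℝ) : ℝ :=
  s * dotP (D (s * cos α, Φ (s * cos α, s * sin α) + Δl, s * sin α))
    (p1 Φ (s * cos α, s * sin α), -1, p2 Φ (s * cos α, s * sin α))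

theorem continuous_topFluxIntegrand {Φ : ℝ × ℝ → ℝ} {D : ℝ × ℝ × ℝ → ℝ × ℝ × ℝ}
    (hΦ : ContDiff ℝ 1 Φ) (hD : Continuous D) (Δl : ℝ) :
    Continuous (Function.uncurry (topFluxIntegrand Φ D Δl)) := by
  have hΦc := hΦ.continuous
  have hp₁ : Continuous (p1 Φ) := (hΦ.continuous_fderiv one_ne_zero).clm_apply continuous_const
  have hp₂ : Continuous (p2 Φ) := (hΦ.continuous_fderiv one_ne_zero).clm_apply continuous_const
  unfold Function.uncurry topFluxIntegrand dotP
  fun_prop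

theorem abs_topFluxIntegrand_sub_le {Φ : ℝ × ℝ → ℝ} {D : ℝ × ℝ × ℝ → ℝ × ℝ × ℝ}
    {M r₀ Δl α s : ℝ} (hM : 0 ≤ M) (hs : 0 ≤ s) (hsr₀ : s ≤ r₀)
    (hgrad : ∀ q, ‖fderiv ℝ Φ q‖ ≤ M * ‖q‖) (hΦ : ∀ q, |Φ q| ≤ M * ‖q‖ ^ 2)
    (hDlip : ∀ a b, ‖D a - D b‖ ≤ M * ‖a - b‖) (hDb : ∀ p, ‖D p‖ ≤ M) :
    |topFluxIntegrand Φ D Δl α s - s * dotP (D (0, Δl, 0)) (0, -1, 0)|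
      ≤ M * (2 * M + 1 + M * r₀) * s ^ 2 := by
  rw [topFluxIntegrand, ← mul_sub, dotP_sub_dotP, abs_mul, abs_of_nonneg hs]
  set q : ℝ × ℝ := (s * cos α, s * sin α)
  set P : ℝ × ℝ × ℝ := (s * cos α, Φ q + Δl, s * sin α)
  have hq : ‖q‖ ≤ s := norm_polar_le s α hs
  have hgradq : ‖fderiv ℝ Φ q‖ ≤ M * s := (hgrad q).trans (by gcongr)
  have hp₁ : |p1 Φ q| ≤ M * s := by
    simpa [p1] using ((fderiv ℝ Φ q).le_opNorm (1, 0)).trans (by simpa using hgradq)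
  have hp₂ : |p2 Φ q| ≤ M * s := by
    simpa [p2] using ((fderiv ℝ Φ q).le_opNorm (0, 1)).trans (by simpa using hgradq)
  have hΦq : |Φ q| ≤ M * r₀ * s :=
    calc |Φ q| ≤ M * ‖q‖ ^ 2 := hΦ q
      _ ≤ M * (r₀ * s) := by gcongr; nlinarith [norm_nonneg q]
      _ = M * r₀ * s := by ring
  have hPQ : ‖P - (0, Δl, 0)‖ ≤ (1 + M * r₀) * s := by
    have hsc : |s * cos α| ≤ s := (norm_fst_le q).trans hq
    have hss : |s * sin α| ≤ s := (norm_snd_le q).trans hq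
    simp only [P, Prod.mk_sub_mk, sub_zero, add_sub_cancel_right, Prod.norm_def,
      Real.norm_eq_abs]
    refine max_le ?_ (max_le ?_ ?_) <;> nlinarith [mul_nonneg hM (hs.trans hsr₀)]
  have hnormal : |dotP (D P) ((p1 Φ q, -1, p2 Φ q) - (0, -1, 0))| ≤ M * (M * s + M * s) := by
    refine (abs_dotP_le _ _).trans ?_
    simp only [Prod.mk_sub_mk, sub_zero, sub_self, abs_zero, add_zero]
    exact mul_le_mul (hDb P) (add_le_add hp₁ hp₂) (by positivity) hM
  have hbase : |dotP (D P - D (0, Δl, 0)) (0, -1, 0)| ≤ M * ((1 + M * r₀) * s) := by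
    refine (abs_dotP_le _ _).trans ?_
    simpa using (hDlip _ _).trans (mul_le_mul_of_nonneg_left hPQ hM)
  calc s * |dotP (D P) ((p1 Φ q, -1, p2 Φ q) - (0, -1, 0)) + dotP (D P - D (0, Δl, 0)) (0, -1, 0)|
      ≤ s * (M * (M * s + M * s) + M * ((1 + M * r₀) * s)) := by
        gcongr
        exact (abs_add_le _ _).trans (add_le_add hnormal hbase)
    _ = M * (2 * M + 1 + M * r₀) * s ^ 2 := by ring

theorem abs_intervalIntegral_sub_le {f g : ℝ → ℝ} {a b B : ℝ} (hab : a ≤ b)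
    (hf : IntervalIntegrable f MeasureTheory.volume a b)
    (hg : IntervalIntegrable g MeasureTheory.volume a b)
    (hB : ∀ x ∈ Ioc a b, |f x - g x| ≤ B) :
    |(∫ x in a..b, f x) - ∫ x in a..b, g x| ≤ B * (b - a) := by
  rw [← integral_sub hf hg, ← Real.norm_eq_abs, ← abs_of_nonneg (sub_nonneg.mpr hab)]
  refine norm_integral_le_of_norm_le_const fun x hx => ?_
  rw [uIoc_of_le hab] at hx
  exact hB x hx

theorem abs_polarIntegral_sub_le {g : ℝ → ℝ → ℝ} (hg : Continuous (Function.uncurry g))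
    {c B r : ℝ} (hr : 0 ≤ r) (hB : ∀ α, ∀ s ∈ Ioc 0 r, |g α s - s * c| ≤ B) :
    |(∫ α in (0 : ℝ)..(2 * π), ∫ s in (0 : ℝ)..r, g α s) - π * r ^ 2 * c| ≤ 2 * π * (B * r) := by
  have hradial : ∀ α, |(∫ s in (0 : ℝ)..r, g α s) - r ^ 2 / 2 * c| ≤ B * r := fun α => by
    simpa [integral_mul_const, integral_id] using abs_intervalIntegral_sub_le hr
      ((hg.comp (Continuous.prodMk_right α)).intervalIntegrable 0 r)
      ((continuous_id.mul continuous_const).intervalIntegrable 0 r) (hB α)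
  have h := abs_intervalIntegral_sub_le two_pi_pos.le
    ((continuous_parametric_intervalIntegral_of_continuous' hg 0 r).intervalIntegrable 0 (2 * π))
    intervalIntegrable_const (fun α _ => hradial α)
  rw [integral_const, smul_eq_mul, sub_zero] at h
  rw [show π * r ^ 2 * c = 2 * π * (r ^ 2 / 2 * c) by ring]
  linarith

/-- Flux estimate over the curved top face Δ_top of the cylinder C:
|∫₀^{2π}∫₀^r s·D(s cos α, Φ(s cos α, s sin α)+Δl, s sin α)·(∂₁Φ, −1, ∂₂Φ) ds dα
 − πr²·D(0,Δl,0)·(0,−1,0)| ≤ c·r³, with c independent of r and Δl. -/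
theorem stmt_4 (r₀ M : ℝ) (hr₀ : 0 < r₀) (hM : 0 < M)
    (Φ : ℝ × ℝ → ℝ) (hΦ : ContDiff ℝ 2 Φ)
    (hΦ0 : Φ (0, 0) = 0) (hΦ1 : p1 Φ (0, 0) = 0) (hΦ2 : p2 Φ (0, 0) = 0)
    (hΦb : ∀ q, ‖fderiv ℝ (fderiv ℝ Φ) q‖ ≤ M)
    (D : ℝ × ℝ × ℝ → ℝ × ℝ × ℝ) (hD : ContDiff ℝ 1 D)
    (hDb : ∀ p, ‖D p‖ ≤ M ∧ ‖fderiv ℝ D p‖ ≤ M) :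
    ∃ c > 0, ∀ r ∈ Ioc 0 r₀, ∀ Δl : ℝ,
      |(∫ α in (0:ℝ)..(2 * π), ∫ s in (0:ℝ)..r,
          s * dotP (D (s * cos α, Φ (s * cos α, s * sin α) + Δl, s * sin α))
            (p1 Φ (s * cos α, s * sin α), -1, p2 Φ (s * cos α, s * sin α))) -
        π * r ^ 2 * dotP (D (0, Δl, 0)) (0, -1, 0)| ≤ c * r ^ 3 := by
  have hdΦ0 : fderiv ℝ Φ 0 = 0 :=
    (fderiv ℝ Φ 0).eq_zero_of_apply_one_zero_of_apply_zero_one hΦ1 hΦ2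
  have hgrad : ∀ q, ‖fderiv ℝ Φ q‖ ≤ M * ‖q‖ := norm_le_mul_norm_of_norm_fderiv_le
    ((hΦ.fderiv_right (m := 1) le_rfl).differentiable one_ne_zero) hΦb hdΦ0
  have hΦq : ∀ q, |Φ q| ≤ M * ‖q‖ ^ 2 :=
    norm_le_mul_norm_sq_of_norm_fderiv_le (hΦ.differentiable two_ne_zero) hM.le hgrad hΦ0
  have hDlip : ∀ a b, ‖D a - D b‖ ≤ M * ‖a - b‖ := fun a b =>
    convex_univ.norm_image_sub_le_of_norm_fderiv_le (fun y _ => hD.differentiable one_ne_zero y)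
      (fun y _ => (hDb y).2) (mem_univ b) (mem_univ a)
  set K := M * (2 * M + 1 + M * r₀)
  refine ⟨2 * π * K, by positivity, ?_⟩
  rintro r ⟨hr, hrr₀⟩ Δl
  have hpointwise : ∀ α, ∀ s ∈ Ioc 0 r,
      |topFluxIntegrand Φ D Δl α s - s * dotP (D (0, Δl, 0)) (0, -1, 0)| ≤ K * r ^ 2 :=
    fun α s hs => (abs_topFluxIntegrand_sub_le hM.le hs.1.le (hs.2.trans hrr₀) hgrad hΦq hDlip
      fun p => (hDb p).1).trans (by gcongr; exacts [hs.1.le, hs.2])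
  calc _ ≤ 2 * π * (K * r ^ 2 * r) := abs_polarIntegral_sub_le
        (continuous_topFluxIntegrand (hΦ.of_le one_le_two) hD.continuous Δl) hr.le hpointwise
    _ = 2 * π * K * r ^ 3 := by ring
end
end

section
/- Let D : ℝ³ → ℝ³ be C¹ with ∇D bounded and let Φ be C² as above. Then the flux of D through the lateral surface Δ_side of the curved cylinder of radius r and half-height Δl satisfies |∫_{Δ_side} D · n_side dA| ≤ c · r² · Δl, where c depends only on the bound on ∇D; in particular (1/(πr²))∫_{Δ_side} D · n_side dA → 0 as Δl → 0. -/
open Set Real Filter Topology intervalIntegral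

noncomputable section

/-- Flux of D through the lateral surface Δ_side of the curved cylinder of
radius r and half-height Δl. -/
def sideFlux (Φ : ℝ × ℝ → ℝ) (D : ℝ × ℝ × ℝ → ℝ × ℝ × ℝ) (r Δl : ℝ) : ℝ :=
  ∫ h in (-Δl)..Δl, ∫ α in (0:ℝ)..(2 * π),
    r * dotP (D (r * cos α, Φ (r * cos α, r * sin α) + h, r * sin α))
      (-cos α, 0, -sin α)

/-!
For fixed height `h`, the constant field `D(0, h, 0)` has zero flux through the circle,
since `∫₀^{2π} cos = ∫₀^{2π} sin = 0`. Subtracting it, the integrand is controlled by the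
Lipschitz bound `‖D p - D(0, h, 0)‖ ≤ M ‖p - (0, h, 0)‖ ≤ M (1 + M) |r|`, because `Φ(0) = 0` and
`‖∇Φ‖ ≤ M` keep the surface within height `M |r|` of the axis point. Integrating this
`O(r²)` bound over `α ∈ [0, 2π]` and `h ∈ [-Δl, Δl]` gives `O(r² Δl)`.
-/

def sideNormal (α : ℝ) : ℝ × ℝ × ℝ := (-cos α, 0, -sin α)

def sidePoint (Φ : ℝ × ℝ → ℝ) (r h α : ℝ) : ℝ × ℝ × ℝ :=
  (r * cos α, Φ (r * cos α, r * sin α) + h, r * sin α)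

theorem sideFlux_eq (Φ : ℝ × ℝ → ℝ) (D : ℝ × ℝ × ℝ → ℝ × ℝ × ℝ) (r Δl : ℝ) :
    sideFlux Φ D r Δl =
      ∫ h in (-Δl)..Δl, ∫ α in (0:ℝ)..(2 * π), r * dotP (D (sidePoint Φ r h α)) (sideNormal α) :=
  rfl

theorem dotP_sub_left (a b c : ℝ × ℝ × ℝ) : dotP (a - b) c = dotP a c - dotP b c := by
  simp only [dotP, Prod.fst_sub, Prod.snd_sub]
  ring

theorem continuous_dotP_sideNormal {g : ℝ → ℝ × ℝ × ℝ} (hg : Continuous g) :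
    Continuous fun α => dotP (g α) (sideNormal α) := by
  unfold dotP sideNormal
  fun_prop

theorem abs_dotP_sideNormal_le (v : ℝ × ℝ × ℝ) (α : ℝ) : |dotP v (sideNormal α)| ≤ 2 * ‖v‖ := by
  have h1 : |v.1| ≤ ‖v‖ := norm_fst_le v
  have h3 : |v.2.2| ≤ ‖v‖ := (norm_snd_le v.2).trans (norm_snd_le v)
  calc |dotP v (sideNormal α)| = |v.1 * -cos α + v.2.2 * -sin α| := by
        simp only [dotP, sideNormal, mul_zero, add_zero]
    _ ≤ |v.1| * |cos α| + |v.2.2| * |sin α| := by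
        simpa only [abs_mul, abs_neg] using abs_add_le (v.1 * -cos α) (v.2.2 * -sin α)
    _ ≤ |v.1| * 1 + |v.2.2| * 1 := by
        gcongr
        exacts [abs_cos_le_one α, abs_sin_le_one α]
    _ ≤ 2 * ‖v‖ := by linarith

theorem integral_dotP_sideNormal (v : ℝ × ℝ × ℝ) :
    ∫ α in (0:ℝ)..(2 * π), dotP v (sideNormal α) = 0 := by
  have hv : (fun α => dotP v (sideNormal α)) = fun α => -v.1 * cos α + -v.2.2 * sin α := by
    funext α
    simp only [dotP, sideNormal]
    ring
  rw [hv, integral_add ((by fun_prop : Continuous fun α => -v.1 * cos α).intervalIntegrable _ _)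
    ((by fun_prop : Continuous fun α => -v.2.2 * sin α).intervalIntegrable _ _),
    integral_const_mul, integral_const_mul, integral_cos, integral_sin]
  simp

theorem abs_integral_dotP_sideNormal_le {g : ℝ → ℝ × ℝ × ℝ} (hg : Continuous g)
    (v : ℝ × ℝ × ℝ) {K : ℝ} (hK : ∀ α, ‖g α - v‖ ≤ K) :
    |∫ α in (0:ℝ)..(2 * π), dotP (g α) (sideNormal α)| ≤ 2 * π * (2 * K) := by
  have hsub : ∫ α in (0:ℝ)..(2 * π), dotP (g α) (sideNormal α) =
      ∫ α in (0:ℝ)..(2 * π), dotP (g α - v) (sideNormal α) := by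
    simp only [dotP_sub_left]
    rw [integral_sub ((continuous_dotP_sideNormal hg).intervalIntegrable _ _)
      ((continuous_dotP_sideNormal continuous_const).intervalIntegrable _ _),
      integral_dotP_sideNormal, sub_zero]
  rw [hsub, ← Real.norm_eq_abs]
  calc _ ≤ 2 * K * |2 * π - 0| := norm_integral_le_of_norm_le_const fun α _ =>
          (abs_dotP_sideNormal_le _ α).trans (by gcongr; exact hK α)
    _ = 2 * π * (2 * K) := by rw [sub_zero, abs_of_pos two_pi_pos]; ring

theorem norm_sidePoint_sub_le {Φ : ℝ × ℝ → ℝ} {A : ℝ} (hA : 0 ≤ A)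
    (hΦ : ∀ q, |Φ q| ≤ A * ‖q‖) (r h α : ℝ) :
    ‖sidePoint Φ r h α - (0, h, 0)‖ ≤ (1 + A) * |r| := by
  have hc : |r * cos α| ≤ |r| := by
    rw [abs_mul]; exact mul_le_of_le_one_right (abs_nonneg r) (abs_cos_le_one α)
  have hs : |r * sin α| ≤ |r| := by
    rw [abs_mul]; exact mul_le_of_le_one_right (abs_nonneg r) (abs_sin_le_one α)
  have hq : ‖((r * cos α, r * sin α) : ℝ × ℝ)‖ ≤ |r| := max_le hc hs
  have hΦq : |Φ (r * cos α, r * sin α)| ≤ A * |r| :=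
    (hΦ _).trans (mul_le_mul_of_nonneg_left hq hA)
  have hr : |r| ≤ (1 + A) * |r| := le_mul_of_one_le_left (abs_nonneg r) (by linarith)
  have hAr : A * |r| ≤ (1 + A) * |r| := by gcongr; linarith
  have hdiff : sidePoint Φ r h α - (0, h, 0) =
      (r * cos α, Φ (r * cos α, r * sin α), r * sin α) := by
    simp [sidePoint]
  rw [hdiff, Prod.norm_def, Prod.norm_def]
  exact max_le (hc.trans hr) (max_le (hΦq.trans hAr) (hs.trans hr))

theorem abs_sideFlux_le {Φ : ℝ × ℝ → ℝ} {D : ℝ × ℝ × ℝ → ℝ × ℝ × ℝ} {A B : ℝ}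
    (hA : 0 ≤ A) (hB : 0 ≤ B) (hΦc : Continuous Φ) (hΦ : ∀ q, |Φ q| ≤ A * ‖q‖)
    (hDc : Continuous D) (hD : ∀ x y, ‖D x - D y‖ ≤ B * ‖x - y‖) (r : ℝ) {Δl : ℝ} (hΔl : 0 ≤ Δl) :
    |sideFlux Φ D r Δl| ≤ 8 * π * B * (1 + A) * r ^ 2 * Δl := by
  have hinner : ∀ h, ‖∫ α in (0:ℝ)..(2 * π), r * dotP (D (sidePoint Φ r h α)) (sideNormal α)‖ ≤
      |r| * (2 * π * (2 * (B * ((1 + A) * |r|)))) := fun h => by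
    rw [integral_const_mul, norm_mul, Real.norm_eq_abs, Real.norm_eq_abs]
    refine mul_le_mul_of_nonneg_left ?_ (abs_nonneg r)
    refine abs_integral_dotP_sideNormal_le (by unfold sidePoint; fun_prop) (D (0, h, 0)) fun α => ?_
    exact (hD _ _).trans (mul_le_mul_of_nonneg_left (norm_sidePoint_sub_le hA hΦ r h α) hB)
  rw [sideFlux_eq, ← Real.norm_eq_abs]
  calc _ ≤ |r| * (2 * π * (2 * (B * ((1 + A) * |r|)))) * |Δl - -Δl| :=
        norm_integral_le_of_norm_le_const fun h _ => hinner h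
    _ = 8 * π * B * (1 + A) * r ^ 2 * Δl := by
        rw [sub_neg_eq_add, abs_of_nonneg (by linarith : 0 ≤ Δl + Δl), ← sq_abs r]
        ring

theorem tendsto_nhdsGT_zero_of_abs_le_mul {f : ℝ → ℝ} {c : ℝ} (hf : ∀ x > 0, |f x| ≤ c * x) :
    Tendsto f (𝓝[>] 0) (𝓝 0) := by
  have hlin : Tendsto (fun x : ℝ => c * x) (𝓝[>] 0) (𝓝 0) := by
    simpa using ((continuous_const_mul c).tendsto 0).mono_left nhdsWithin_le_nhds
  exact squeeze_zero_norm' (eventually_nhdsWithin_of_forall hf) hlin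

theorem stmt_5_general (r M : ℝ) (hM : 0 < M)
    (Φ : ℝ × ℝ → ℝ) (hΦ : ContDiff ℝ 2 Φ)
    (hΦ0 : Φ (0, 0) = 0)
    (hΦb : ∀ q, ‖fderiv ℝ Φ q‖ ≤ M ∧ ‖fderiv ℝ (fderiv ℝ Φ) q‖ ≤ M)
    (D : ℝ × ℝ × ℝ → ℝ × ℝ × ℝ) (hD : ContDiff ℝ 1 D)
    (hDb : ∀ p, ‖fderiv ℝ D p‖ ≤ M) :
    (∃ c > 0, ∀ Δl > (0:ℝ), |sideFlux Φ D r Δl| ≤ c * r ^ 2 * Δl) ∧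
    Tendsto (fun Δl => (1 / (π * r ^ 2)) * sideFlux Φ D r Δl) (𝓝[>] 0) (𝓝 0) := by
  have hΦlip : ∀ q, |Φ q| ≤ M * ‖q‖ := fun q => by
    have h0 : Φ 0 = 0 := hΦ0
    simpa [h0] using convex_univ.norm_image_sub_le_of_norm_fderiv_le
      (fun z _ => (hΦ.differentiable two_ne_zero).differentiableAt) (fun z _ => (hΦb z).1)
      (mem_univ 0) (mem_univ q)
  have hDlip : ∀ x y, ‖D x - D y‖ ≤ M * ‖x - y‖ := fun x y =>
    convex_univ.norm_image_sub_le_of_norm_fderiv_le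
      (fun z _ => (hD.differentiable one_ne_zero).differentiableAt) (fun z _ => hDb z)
      (mem_univ y) (mem_univ x)
  have hbound : ∀ Δl > (0:ℝ), |sideFlux Φ D r Δl| ≤ 8 * π * M * (1 + M) * r ^ 2 * Δl :=
    fun Δl hΔl => abs_sideFlux_le hM.le hM.le hΦ.continuous hΦlip hD.continuous hDlip r hΔl.le
  refine ⟨⟨8 * π * M * (1 + M), by positivity, hbound⟩, ?_⟩
  refine tendsto_nhdsGT_zero_of_abs_le_mul (c := |1 / (π * r ^ 2)| * (8 * π * M * (1 + M) * r ^ 2))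
    fun Δl hΔl => ?_
  rw [abs_mul, mul_assoc]
  exact mul_le_mul_of_nonneg_left (hbound Δl hΔl) (abs_nonneg _)

/-- The lateral flux satisfies |∫_{Δ_side} D·n dA| ≤ c·r²·Δl with c depending
only on the bound on ∇D; in particular (1/(πr²))·(lateral flux) → 0 as Δl → 0. -/
theorem stmt_5 (r M : ℝ) (hr : 0 < r) (hM : 0 < M)
    (Φ : ℝ × ℝ → ℝ) (hΦ : ContDiff ℝ 2 Φ)
    (hΦ0 : Φ (0, 0) = 0) (hΦ1 : fderiv ℝ Φ (0, 0) = 0)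
    (hΦb : ∀ q, ‖fderiv ℝ Φ q‖ ≤ M ∧ ‖fderiv ℝ (fderiv ℝ Φ) q‖ ≤ M)
    (D : ℝ × ℝ × ℝ → ℝ × ℝ × ℝ) (hD : ContDiff ℝ 1 D)
    (hDb : ∀ p, ‖fderiv ℝ D p‖ ≤ M) :
    (∃ c > 0, ∀ Δl > (0:ℝ), |sideFlux Φ D r Δl| ≤ c * r ^ 2 * Δl) ∧
    Tendsto (fun Δl => (1 / (π * r ^ 2)) * sideFlux Φ D r Δl) (𝓝[>] 0) (𝓝 0) :=
  stmt_5_general r M hM Φ hΦ hΦ0 hΦb D hD hDb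
end
end
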